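/- arXiv:1803.06281 — 3 statements merged into one kernel-verified Lean document; each statement's English description precedes it below -/
import Mathlib

section
/- Let R be a commutative unital ring with 2 invertible, n > 1, and for i ≠ j let s_{i,j} = e_{i,j} - e_{j,i} ∈ K_n(R), where e_{i,j} are the matrix units. If a, b ∈ K_n(R) satisfy [a, s_{i,j}] - [s_{i,j}, a] = [b, s_{i,j}] - [s_{i,j}, b] (equivalently a s_{i,j} - s_{i,j} a = b s_{i,j} - s_{i,j} b), then a^{i,k} = b^{i,k} and a^{j,k} = b^{j,k} for all k distinct from both i and j. -/
open Matrix

theorem commute_sub_of_commutator_sub_swap_eq {R A : Type*} [CommRing R] [Ring A] [Module R A]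
    (h2 : IsUnit (2 : R)) {x y z : A}
    (h : (x * z - z * x) - (z * x - x * z) = (y * z - z * y) - (z * y - y * z)) :
    Commute (x - y) z := by
  have htwo : (2 : R) • (x * z - z * x) = (2 : R) • (y * z - z * y) := by
    rwa [← neg_sub (x * z), ← neg_sub (y * z), sub_neg_eq_add, sub_neg_eq_add, ← two_smul R,
      ← two_smul R] at h
  have hcomm : x * z - z * x = y * z - z * y := h2.smul_left_cancel.mp htwo
  rw [Commute, SemiconjBy, ← sub_eq_zero]
  calc (x - y) * z - z * (x - y) = (x * z - z * x) - (y * z - z * y) := by noncomm_ring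
    _ = 0 := by rw [hcomm, sub_self]

theorem Matrix.apply_eq_zero_of_commute_single_sub_single {ι α : Type*} [Fintype ι]
    [DecidableEq ι] [Ring α] {c : Matrix ι ι α} {i j k : ι} (hij : i ≠ j) (hki : k ≠ i)
    (hkj : k ≠ j) (hc : Commute c (single i j 1 - single j i 1)) :
    c i k = 0 := by
  -- at entry `(j, k)`, `c * s` vanishes while `s * c` is `-c i k`
  have hjk := congr_fun (congr_fun hc.eq j) k
  simpa [mul_sub, sub_mul, hki, hkj, hij.symm] using hjk.symm

theorem stmt8_general {n : ℕ} (R : Type*) [CommRing R] (h2 : IsUnit (2 : R))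
    (i j : Fin n) (hij : i ≠ j)
    (a b : Matrix (Fin n) (Fin n) R)
    (s : Matrix (Fin n) (Fin n) R)
    (hs : s = single i j 1 - single j i 1)
    (h : (a * s - s * a) - (s * a - a * s) = (b * s - s * b) - (s * b - b * s)) :
    ∀ k : Fin n, k ≠ i → k ≠ j → a i k = b i k ∧ a j k = b j k := by
  intro k hki hkj
  subst hs
  have hc := commute_sub_of_commutator_sub_swap_eq h2 h
  have hc' : Commute (a - b) (single j i 1 - single i j 1) := by
    simpa only [neg_sub] using hc.neg_right
  have hik : (a - b) i k = 0 := apply_eq_zero_of_commute_single_sub_single hij hki hkj hc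
  have hjk : (a - b) j k = 0 := apply_eq_zero_of_commute_single_sub_single hij.symm hkj hki hc'
  exact ⟨sub_eq_zero.mp hik, sub_eq_zero.mp hjk⟩

/-- If two skew-symmetric matrices `a`, `b` induce the same inner Lie derivation
value on `s_{i,j} = e_{i,j} - e_{j,i}`, then their `i`-th and `j`-th rows agree
off the positions `i` and `j`. -/
theorem stmt8 {n : ℕ} (hn : 1 < n) (R : Type*) [CommRing R] (h2 : IsUnit (2 : R))
    (i j : Fin n) (hij : i ≠ j)
    (a b : Matrix (Fin n) (Fin n) R) (ha : aᵀ = -a) (hb : bᵀ = -b)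
    (s : Matrix (Fin n) (Fin n) R)
    (hs : s = single i j 1 - single j i 1)
    (h : (a * s - s * a) - (s * a - a * s) = (b * s - s * b) - (s * b - b * s)) :
    ∀ k : Fin n, k ≠ i → k ≠ j → a i k = b i k ∧ a j k = b j k :=
  stmt8_general R h2 i j hij a b s hs h
end

section
/- Let R be a commutative unital ring with 2 invertible, n > 3, and Δ a 2-local inner derivation on the Lie ring K_n(R) of skew-symmetric n×n matrices. Then there exists a single element a ∈ K_n(R) such that Δ(s_{i,j}) = [a, s_{i,j}] - [s_{i,j}, a] for every pair of distinct indices i, j. -/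
/-!
Write `[c, x] - [x, c] = 2[c, x]` for the inner derivation of `c`. Since `2` is invertible, two
skew-symmetric matrices `e, e'` satisfy `2[e, s_{i,j}] = 2[e', s_{i,j}]` exactly when `e - e'`
commutes with `s_{i,j}`, i.e. when `e` and `e'` agree in the rows `i, j` off the columns `i, j`.
Hence the entry `(p, q)` of any witness for `Δ(s_{i,j})` (a skew-symmetric `e` with
`Δ(s_{i,j}) = 2[e, s_{i,j}]`) with `p ∈ {i, j}`, `q ∉ {i, j}` depends
only on `(p, q)`: two such witnesses agree with a common witness for the pair of arguments.
Taking these entries (using a third index `r ∉ {p, q}` to pick one `s_{p,r}`) defines `a`, which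
is skew-symmetric by the same argument applied to a common witness for `s_{p,r}` and `s_{q,r'}`,
and `a` agrees with every witness for `Δ(s_{i,j})` in the rows `i, j` off the columns `i, j`.
-/

open Matrix

section SkewSymmetric

variable {ι R : Type*} [CommRing R]

section Bracket

variable [Fintype ι]

def innerDer (c x : Matrix ι ι R) : Matrix ι ι R :=
  (c * x - x * c) - (x * c - c * x)

def IsTwoLocalInnerDer (Δ : Matrix ι ι R → Matrix ι ι R) : Prop :=
  ∀ x y : Matrix ι ι R, xᵀ = -x → yᵀ = -y →
    ∃ c : Matrix ι ι R, cᵀ = -c ∧ Δ x = innerDer c x ∧ Δ y = innerDer c y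

lemma innerDer_sub_left (c c' x : Matrix ι ι R) :
    innerDer (c - c') x = innerDer c x - innerDer c' x := by
  simp only [innerDer, sub_mul, mul_sub]
  abel

lemma innerDer_eq_zero_iff (h2 : IsUnit (2 : R)) {c x : Matrix ι ι R} :
    innerDer c x = 0 ↔ Commute c x := by
  have h : innerDer c x = (2 : R) • (c * x - x * c) := by
    rw [innerDer, two_smul]
    abel
  rw [h, h2.smul_eq_zero, sub_eq_zero]
  rfl

end Bracket

lemma apply_eq_neg_of_transpose_eq_neg {c : Matrix ι ι R} (hc : cᵀ = -c) (p q : ι) :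
    c q p = -c p q := by
  simpa using congrFun (congrFun hc p) q

lemma apply_self_eq_zero_of_transpose_eq_neg (h2 : IsUnit (2 : R)) {c : Matrix ι ι R}
    (hc : cᵀ = -c) (p : ι) : c p p = 0 := by
  refine h2.mul_left_cancel ?_
  linear_combination apply_eq_neg_of_transpose_eq_neg hc p p

variable [DecidableEq ι]

def skewSingle (i j : ι) : Matrix ι ι R :=
  single i j 1 - single j i 1

lemma skewSingle_transpose (i j : ι) : (skewSingle i j : Matrix ι ι R)ᵀ = -skewSingle i j := by
  ext k l
  simp [skewSingle, single, and_comm]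

variable [Fintype ι]

lemma mul_skewSingle_apply (c : Matrix ι ι R) (i j k l : ι) :
    (c * (skewSingle i j : Matrix ι ι R)) k l =
      (if l = j then c k i else 0) - (if l = i then c k j else 0) := by
  simp only [skewSingle, mul_sub, Matrix.sub_apply, mul_apply, single, of_apply, mul_ite, mul_one,
    mul_zero, ite_and, Finset.sum_sub_distrib]
  rw [Finset.sum_ite_eq, Finset.sum_ite_eq]
  simp [eq_comm]

lemma skewSingle_mul_apply (c : Matrix ι ι R) (i j k l : ι) :
    ((skewSingle i j : Matrix ι ι R) * c) k l =
      (if k = i then c j l else 0) - (if k = j then c i l else 0) := by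
  simp only [skewSingle, sub_mul, Matrix.sub_apply, mul_apply, single, of_apply, ite_mul, one_mul,
    zero_mul, ite_and, Finset.sum_sub_distrib]
  by_cases hik : i = k <;> by_cases hjk : j = k <;>
    simp [hik, hjk, Finset.sum_ite_eq, eq_comm]

lemma commute_skewSingle_iff (h2 : IsUnit (2 : R)) {i j : ι} (hij : i ≠ j)
    {d : Matrix ι ι R} (hd : dᵀ = -d) :
    Commute d (skewSingle i j) ↔ ∀ q, q ≠ i → q ≠ j → d i q = 0 ∧ d j q = 0 := by
  have hskew := apply_eq_neg_of_transpose_eq_neg hd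
  have hdiag := apply_self_eq_zero_of_transpose_eq_neg h2 hd
  constructor
  · intro h q hqi hqj
    have hi := congrFun (congrFun h.eq i) q
    have hj := congrFun (congrFun h.eq j) q
    simp only [mul_skewSingle_apply, skewSingle_mul_apply, if_neg hqi, if_neg hqj,
      if_neg hij, if_neg hij.symm, if_pos] at hi hj
    exact ⟨by linear_combination hj, by linear_combination -hi⟩
  · intro h
    have hcol : ∀ q, q ≠ i → q ≠ j → d q i = 0 ∧ d q j = 0 := fun q hqi hqj => by
      rw [hskew, hskew j, (h q hqi hqj).1, (h q hqi hqj).2, neg_zero, and_self]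
    have hji := hskew i j
    clear hskew hd
    ext k l
    rw [mul_skewSingle_apply, skewSingle_mul_apply]
    by_cases hki : k = i <;> by_cases hkj : k = j <;> by_cases hli : l = i <;>
      by_cases hlj : l = j <;> simp_all

lemma innerDer_skewSingle_eq_iff (h2 : IsUnit (2 : R)) {i j : ι} (hij : i ≠ j)
    {e e' : Matrix ι ι R} (he : eᵀ = -e) (he' : e'ᵀ = -e') :
    innerDer e (skewSingle i j) = innerDer e' (skewSingle i j) ↔
      ∀ q, q ≠ i → q ≠ j → e i q = e' i q ∧ e j q = e' j q := by
  have hd : (e - e')ᵀ = -(e - e') := by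
    rw [transpose_sub, he, he']
    abel
  rw [← sub_eq_zero, ← innerDer_sub_left, innerDer_eq_zero_iff h2,
    commute_skewSingle_iff h2 hij hd]
  simp only [Matrix.sub_apply, sub_eq_zero]

namespace IsTwoLocalInnerDer

variable {Δ : Matrix ι ι R → Matrix ι ι R}

lemma apply_eq_of_witness (hΔ : IsTwoLocalInnerDer Δ) (h2 : IsUnit (2 : R))
    {i j i' j' p q : ι} (hij : i ≠ j) (hij' : i' ≠ j') (hp : p = i ∨ p = j)
    (hp' : p = i' ∨ p = j') (hqi : q ≠ i) (hqj : q ≠ j) (hqi' : q ≠ i') (hqj' : q ≠ j')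
    {e e' : Matrix ι ι R} (he : eᵀ = -e) (hΔe : Δ (skewSingle i j) = innerDer e (skewSingle i j))
    (he' : e'ᵀ = -e') (hΔe' : Δ (skewSingle i' j') = innerDer e' (skewSingle i' j')) :
    e p q = e' p q := by
  obtain ⟨c, hc, hΔc, hΔc'⟩ := hΔ _ _ (skewSingle_transpose i j) (skewSingle_transpose i' j')
  have hec := (innerDer_skewSingle_eq_iff h2 hij he hc).1 (hΔe.symm.trans hΔc) q hqi hqj
  have hec' := (innerDer_skewSingle_eq_iff h2 hij' he' hc).1 (hΔe'.symm.trans hΔc') q hqi' hqj'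
  rcases hp with rfl | rfl <;> rcases hp' with h | h <;> subst h <;> simp only [hec, hec']

theorem exists_eq_innerDer_skewSingle (hΔ : IsTwoLocalInnerDer Δ) (h2 : IsUnit (2 : R))
    (h3 : 3 ≤ Fintype.card ι) :
    ∃ a : Matrix ι ι R, aᵀ = -a ∧
      ∀ i j, i ≠ j → Δ (skewSingle i j) = innerDer a (skewSingle i j) := by
  choose r hrp hrq using Cardinal.exists_ne_ne_of_three_le (α := ι)
    (by rw [Cardinal.mk_fintype]; exact_mod_cast h3)
  choose W hW hΔW _
    using fun i j : ι => hΔ _ _ (skewSingle_transpose i j) (skewSingle_transpose i j)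
  set a : Matrix ι ι R := of fun p q => if p = q then 0 else W p (r p q) p q with ha_def
  have key : ∀ {i j p q : ι} {e : Matrix ι ι R}, i ≠ j → (p = i ∨ p = j) → q ≠ i → q ≠ j →
      eᵀ = -e → Δ (skewSingle i j) = innerDer e (skewSingle i j) → e p q = a p q := by
    intro i j p q e hij hp hqi hqj he hΔe
    have hpq : p ≠ q := by rintro rfl; rcases hp with rfl | rfl <;> contradiction
    rw [ha_def, of_apply, if_neg hpq]
    exact hΔ.apply_eq_of_witness h2 hij (hrp p q).symm hp (.inl rfl) hqi hqj hpq.symm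
      (hrq p q).symm he hΔe (hW p (r p q)) (hΔW p (r p q))
  have ha : aᵀ = -a := by
    ext p q
    rw [transpose_apply, Matrix.neg_apply]
    by_cases hpq : p = q
    · simp [ha_def, hpq]
    obtain ⟨c, hc, hΔc, hΔc'⟩ :=
      hΔ _ _ (skewSingle_transpose p (r p q)) (skewSingle_transpose q (r q p))
    rw [← key (hrp p q).symm (.inl rfl) (Ne.symm hpq) (hrq p q).symm hc hΔc,
      ← key (hrp q p).symm (.inl rfl) hpq (hrq q p).symm hc hΔc',
      apply_eq_neg_of_transpose_eq_neg hc]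
  refine ⟨a, ha, fun i j hij => ?_⟩
  rw [hΔW i j, innerDer_skewSingle_eq_iff h2 hij (hW i j) ha]
  exact fun q hqi hqj => ⟨key hij (.inl rfl) hqi hqj (hW i j) (hΔW i j),
    key hij (.inr rfl) hqi hqj (hW i j) (hΔW i j)⟩

end IsTwoLocalInnerDer

end SkewSymmetric

/-- For a 2-local inner derivation `Δ` on the Lie ring of skew-symmetric
matrices (`n > 3`), there is a single skew-symmetric `a` such that
`Δ(s_{i,j}) = [a,s_{i,j}] - [s_{i,j},a]` for all distinct `i, j`. -/
theorem stmt10 {n : ℕ} (hn : 3 < n) (R : Type*) [CommRing R] (h2 : IsUnit (2 : R))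
    (Δ : Matrix (Fin n) (Fin n) R → Matrix (Fin n) (Fin n) R)
    (hΔ : ∀ x y : Matrix (Fin n) (Fin n) R, xᵀ = -x → yᵀ = -y →
        ∃ c : Matrix (Fin n) (Fin n) R, cᵀ = -c ∧
          Δ x = (c * x - x * c) - (x * c - c * x) ∧
          Δ y = (c * y - y * c) - (y * c - c * y)) :
    ∃ a : Matrix (Fin n) (Fin n) R, aᵀ = -a ∧
      ∀ i j : Fin n, i ≠ j →
        ∀ s : Matrix (Fin n) (Fin n) R,
          s = single i j 1 - single j i 1 →
          Δ s = (a * s - s * a) - (s * a - a * s) := by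
  obtain ⟨a, ha, hΔa⟩ :=
    IsTwoLocalInnerDer.exists_eq_innerDer_skewSingle hΔ h2 (by rw [Fintype.card_fin]; omega)
  exact ⟨a, ha, fun i j hij s hs => hs ▸ hΔa i j hij⟩
end

section
/- Let A be a commutative unital algebra over a field of characteristic not 2 and n > 3. Every 2-local inner derivation on the Lie algebra K_n(A) of skew-symmetric n×n matrices over A is an inner derivation. -/
/-!
After halving `Δ`, the inner derivations are `⁅c, ·⁆`. Write `E k l = single k l 1 - single l k 1`.
For any `c` and `r ∉ {k, l}` one has `⁅c, E k l⁆ r l = c r k`, so any `c` implementing `δ` at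
`E j m` (`m ∉ {i, j}`) has `c i j = δ (E j m) i m`; 2-locality at the pair `E j m`, `E j m'` shows
that this value does not depend on `m`, which defines the implementing matrix `a`. For skew `x`
and `k ≠ l`, take `c` implementing `δ` on both `x` and `E k l`: then `c` agrees with `a` in the
columns `k` and `l`, and by skew-symmetry these are the only entries of `c` that the `(k, l)` entry
of `⁅c, x⁆` involves. Characteristic `≠ 2` also makes the diagonal of a skew matrix vanish.
-/

open Matrix

namespace Matrix

variable {n : Type*} {A : Type*} [CommRing A]

theorem apply_eq_neg_of_transpose_eq_neg {c : Matrix n n A} (hc : cᵀ = -c) (i j : n) :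
    c i j = -c j i :=
  congrFun (congrFun hc j) i

theorem apply_self_eq_zero_of_transpose_eq_neg (h2 : IsLeftRegular (2 : A)) {c : Matrix n n A}
    (hc : cᵀ = -c) (k : n) : c k k = 0 := by
  refine h2 ?_
  simp only [mul_zero, two_mul]
  nth_rewrite 2 [apply_eq_neg_of_transpose_eq_neg hc]
  exact add_neg_cancel _

variable [DecidableEq n]

def skewSingle (k l : n) : Matrix n n A :=
  single k l 1 - single l k 1

theorem skewSingle_transpose (k l : n) :
    (skewSingle k l : Matrix n n A)ᵀ = -skewSingle k l := by
  simp [skewSingle]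

variable [Fintype n]

theorem lie_skewSingle_apply_right (c : Matrix n n A) {k l p : n} (hkl : k ≠ l) (hpk : p ≠ k)
    (hpl : p ≠ l) : ⁅c, skewSingle k l⁆ p l = c p k := by
  simp [Ring.lie_def, skewSingle, mul_sub, sub_mul, hkl.symm, hpk, hpl]

theorem lie_skewSingle_apply_left (c : Matrix n n A) {k l p : n} (hkl : k ≠ l) (hpk : p ≠ k)
    (hpl : p ≠ l) : ⁅c, skewSingle k l⁆ p k = -c p l := by
  simp [Ring.lie_def, skewSingle, mul_sub, sub_mul, hkl, hpk, hpl]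

omit [DecidableEq n] in
theorem lie_apply_self_of_transpose_eq_neg {c x : Matrix n n A} (hc : cᵀ = -c) (hx : xᵀ = -x)
    (k : n) : ⁅c, x⁆ k k = 0 := by
  simp only [Ring.lie_def, sub_apply, mul_apply, sub_eq_zero]
  refine Finset.sum_congr rfl fun r _ => ?_
  rw [apply_eq_neg_of_transpose_eq_neg hc r k, apply_eq_neg_of_transpose_eq_neg hx k r,
    neg_mul_neg, mul_comm]

theorem lie_apply_eq_of_col_eq (h2 : IsLeftRegular (2 : A)) {a c x : Matrix n n A}
    (ha : aᵀ = -a) (hc : cᵀ = -c) (hx : xᵀ = -x) {k l : n}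
    (hck : ∀ r, r ≠ k → r ≠ l → c r k = a r k) (hcl : ∀ r, r ≠ k → r ≠ l → c r l = a r l) :
    ⁅c, x⁆ k l = ⁅a, x⁆ k l := by
  have diag {b : Matrix n n A} (hb : bᵀ = -b) := apply_self_eq_zero_of_transpose_eq_neg h2 hb
  have row_k (r : n) (hrl : r ≠ l) : c k r = a k r := by
    by_cases hrk : r = k
    · rw [hrk, diag hc, diag ha]
    · rw [apply_eq_neg_of_transpose_eq_neg hc, apply_eq_neg_of_transpose_eq_neg ha,
        hck r hrk hrl]
  have col_l (r : n) (hrk : r ≠ k) : c r l = a r l := by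
    by_cases hrl : r = l
    · rw [hrl, diag hc, diag ha]
    · exact hcl r hrk hrl
  simp only [Ring.lie_def, sub_apply, mul_apply]
  congr 1 <;> refine Finset.sum_congr rfl fun r _ => ?_
  · by_cases hrl : r = l
    · rw [hrl, diag hx, mul_zero, mul_zero]
    · rw [row_k r hrl]
  · by_cases hrk : r = k
    · rw [hrk, diag hx, zero_mul, zero_mul]
    · rw [col_l r hrk]

def IsTwoLocalInnerOnSkew (δ : Matrix n n A → Matrix n n A) : Prop :=
  ∀ x y : Matrix n n A, xᵀ = -x → yᵀ = -y →
    ∃ c : Matrix n n A, cᵀ = -c ∧ δ x = ⁅c, x⁆ ∧ δ y = ⁅c, y⁆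

namespace IsTwoLocalInnerOnSkew

variable {δ : Matrix n n A → Matrix n n A} (hδ : IsTwoLocalInnerOnSkew δ)
include hδ

theorem apply_skewSingle_apply_eq {k l m r : n} (hkl : k ≠ l) (hkm : k ≠ m) (hrk : r ≠ k)
    (hrl : r ≠ l) (hrm : r ≠ m) : δ (skewSingle k l) r l = δ (skewSingle k m) r m := by
  obtain ⟨c, -, hcl, hcm⟩ := hδ _ _ (skewSingle_transpose k l) (skewSingle_transpose k m)
  rw [hcl, hcm, lie_skewSingle_apply_right c hkl hrk hrl, lie_skewSingle_apply_right c hkm hrk hrm]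

theorem apply_skewSingle_apply_left {k l r : n} (hkl : k ≠ l) (hrk : r ≠ k) (hrl : r ≠ l) :
    δ (skewSingle k l) r k = -δ (skewSingle l k) r k := by
  obtain ⟨c, -, hkl', hlk⟩ := hδ _ _ (skewSingle_transpose k l) (skewSingle_transpose l k)
  rw [hkl', hlk, lie_skewSingle_apply_left c hkl hrk hrl,
    lie_skewSingle_apply_right c hkl.symm hrl hrk]

end IsTwoLocalInnerOnSkew

def innerCandidate (δ : Matrix n n A → Matrix n n A) (m : n → n → n) : Matrix n n A :=
  of fun i j => if i = j then 0 else δ (skewSingle j (m i j)) i (m i j)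

namespace IsTwoLocalInnerOnSkew

variable {δ : Matrix n n A → Matrix n n A} (hδ : IsTwoLocalInnerOnSkew δ) {m : n → n → n}
  (hm : ∀ i j, m i j ≠ i ∧ m i j ≠ j)
include hδ hm

theorem apply_skewSingle_apply_eq_innerCandidate {k l r : n} (hkl : k ≠ l) (hrk : r ≠ k)
    (hrl : r ≠ l) : δ (skewSingle k l) r l = innerCandidate δ m r k := by
  obtain ⟨hmr, hmk⟩ := hm r k
  rw [innerCandidate, of_apply, if_neg hrk]
  exact hδ.apply_skewSingle_apply_eq hkl hmk.symm hrk hrl hmr.symm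

theorem innerCandidate_transpose : (innerCandidate δ m)ᵀ = -innerCandidate δ m := by
  ext i j
  by_cases hij : i = j
  · simp [innerCandidate, hij]
  obtain ⟨hmi, hmj⟩ := hm i j
  obtain ⟨c, hc, hcj, hci⟩ :=
    hδ _ _ (skewSingle_transpose j (m i j)) (skewSingle_transpose i (m i j))
  have hcij : innerCandidate δ m i j = c i j := by
    rw [← hδ.apply_skewSingle_apply_eq_innerCandidate hm hmj.symm hij hmi.symm, hcj,
      lie_skewSingle_apply_right c hmj.symm hij hmi.symm]
  have hcji : innerCandidate δ m j i = c j i := by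
    rw [← hδ.apply_skewSingle_apply_eq_innerCandidate hm hmi.symm (Ne.symm hij) hmj.symm, hci,
      lie_skewSingle_apply_right c hmi.symm (Ne.symm hij) hmj.symm]
  rw [transpose_apply, neg_apply, hcij, hcji, apply_eq_neg_of_transpose_eq_neg hc]

theorem apply_eq_innerCandidate_of_apply_skewSingle_eq_lie {c : Matrix n n A} {k l r : n}
    (hkl : k ≠ l) (hrk : r ≠ k) (hrl : r ≠ l) (hc : δ (skewSingle k l) = ⁅c, skewSingle k l⁆) :
    c r k = innerCandidate δ m r k ∧ c r l = innerCandidate δ m r l := by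
  constructor
  · rw [← lie_skewSingle_apply_right c hkl hrk hrl, ← hc,
      hδ.apply_skewSingle_apply_eq_innerCandidate hm hkl hrk hrl]
  · rw [← neg_neg (c r l), ← lie_skewSingle_apply_left c hkl hrk hrl, ← hc,
      hδ.apply_skewSingle_apply_left hkl hrk hrl, neg_neg,
      hδ.apply_skewSingle_apply_eq_innerCandidate hm hkl.symm hrl hrk]

omit hm in
theorem exists_eq_lie (h2 : IsLeftRegular (2 : A)) (hn : 3 ≤ Fintype.card n) :
    ∃ a : Matrix n n A, aᵀ = -a ∧ ∀ x : Matrix n n A, xᵀ = -x → δ x = ⁅a, x⁆ := by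
  choose m hm using ENat.exists_ne_ne_of_three_le (α := n)
    (by simpa [ENat.card_eq_coe_fintype_card] using hn)
  have ha := hδ.innerCandidate_transpose hm
  refine ⟨innerCandidate δ m, ha, fun x hx => ?_⟩
  ext k l
  obtain ⟨c, hc, hcx, hcE⟩ := hδ x (skewSingle k l) hx (skewSingle_transpose k l)
  rw [hcx]
  by_cases hkl : k = l
  · rw [hkl, lie_apply_self_of_transpose_eq_neg hc hx, lie_apply_self_of_transpose_eq_neg ha hx]
  have col {r} (hrk : r ≠ k) (hrl : r ≠ l) :=
    hδ.apply_eq_innerCandidate_of_apply_skewSingle_eq_lie hm hkl hrk hrl hcE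
  exact lie_apply_eq_of_col_eq h2 ha hc hx (fun r hrk hrl => (col hrk hrl).1)
    (fun r hrk hrl => (col hrk hrl).2)

end IsTwoLocalInnerOnSkew

end Matrix

/-- Every 2-local inner derivation on the Lie algebra of skew-symmetric `n×n`
matrices over a commutative unital algebra over a field of characteristic ≠ 2
(`n > 3`) is an inner derivation. -/
theorem stmt12 {n : ℕ} (hn : 3 < n) (F : Type*) [Field F] (hF : (2 : F) ≠ 0)
    (A : Type*) [CommRing A] [Algebra F A]
    (Δ : Matrix (Fin n) (Fin n) A → Matrix (Fin n) (Fin n) A)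
    (hΔ : ∀ x y : Matrix (Fin n) (Fin n) A, xᵀ = -x → yᵀ = -y →
        ∃ c : Matrix (Fin n) (Fin n) A, cᵀ = -c ∧
          Δ x = (c * x - x * c) - (x * c - c * x) ∧
          Δ y = (c * y - y * c) - (y * c - c * y)) :
    ∃ a : Matrix (Fin n) (Fin n) A, aᵀ = -a ∧
      ∀ x : Matrix (Fin n) (Fin n) A, xᵀ = -x →
        Δ x = (a * x - x * a) - (x * a - a * x) := by
  have two_lie (c x : Matrix (Fin n) (Fin n) A) :
      (c * x - x * c) - (x * c - c * x) = (2 : F) • ⁅c, x⁆ := by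
    rw [two_smul, Ring.lie_def]
    abel
  have h2 : IsLeftRegular (2 : A) := by
    have h2F := (IsUnit.mk0 _ hF).map (algebraMap F A)
    rw [map_ofNat] at h2F
    exact h2F.isRegular.left
  have hδ : IsTwoLocalInnerOnSkew fun x => (2 : F)⁻¹ • Δ x := by
    intro x y hx hy
    obtain ⟨c, hc, hcx, hcy⟩ := hΔ x y hx hy
    refine ⟨c, hc, ?_, ?_⟩ <;> dsimp only
    · rw [hcx, two_lie, inv_smul_smul₀ hF]
    · rw [hcy, two_lie, inv_smul_smul₀ hF]
  obtain ⟨a, ha, hδa⟩ := hδ.exists_eq_lie h2 (by simpa using hn.le)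
  refine ⟨a, ha, fun x hx => ?_⟩
  rw [two_lie, ← hδa x hx, smul_inv_smul₀ hF]
end
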